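/- arXiv:2504.12260 — 4 statements merged into one kernel-verified Lean document; each statement's English description precedes it below -/
import Mathlib

section
/- Let h̄ : ℝⁿ → ℝ ∪ {+∞} be proper lower semicontinuous convex, x ∈ dom h̄, g ∈ ℝⁿ, and 0 < α < β. Define x̄_α = prox_{α h̄}(x - α g) and x̄_β = prox_{β h̄}(x - β g). Then (1/α)‖x - x̄_α‖ ≥ (1/β)‖x - x̄_β‖ and ‖x - x̄_α‖ ≤ ‖x - x̄_β‖. -/
open RealInnerProductSpace

lemma norm_combo {n : ℕ} (t : ℝ) (p q : EuclideanSpace ℝ (Fin n)) :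
    ‖t • q + (1 - t) • p‖ ^ 2
      = t * ‖q‖ ^ 2 + (1 - t) * ‖p‖ ^ 2 - t * (1 - t) * ‖q - p‖ ^ 2 := by
  have e : ∀ v : EuclideanSpace ℝ (Fin n), ‖v‖ ^ 2 = ⟪v, v⟫ :=
    fun v => (real_inner_self_eq_norm_sq v).symm
  rw [e, e, e, e]
  simp only [inner_add_left, inner_add_right, inner_sub_left, inner_sub_right,
    real_inner_smul_left, real_inner_smul_right]
  rw [real_inner_comm p q]; ring

lemma aux_strong {n : ℕ} (h : EuclideanSpace ℝ (Fin n) → EReal)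
    (hconv : ∀ (u v : EuclideanSpace ℝ (Fin n)) (t : ℝ), 0 ≤ t → t ≤ 1 →
      h (t • u + (1 - t) • v) ≤ (t : EReal) * h u + ((1 - t : ℝ) : EReal) * h v)
    (hbot : ∀ u, h u ≠ ⊥)
    (c : ℝ) (hc : 0 < c) (y w z : EuclideanSpace ℝ (Fin n))
    (Hw Hz : ℝ) (hHw : h w = (Hw : EReal)) (hHz : h z = (Hz : EReal))
    (hmin : ∀ u, h w + ((c * ‖w - y‖ ^ 2 : ℝ) : EReal) ≤ h u + ((c * ‖u - y‖ ^ 2 : ℝ) : EReal)) :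
    Hw + c * ‖w - y‖ ^ 2 + c * ‖z - w‖ ^ 2 ≤ Hz + c * ‖z - y‖ ^ 2 := by
  set W : ℝ := ‖w - y‖ ^ 2 with hW
  set Z : ℝ := ‖z - y‖ ^ 2 with hZ
  set D : ℝ := ‖z - w‖ ^ 2 with hD
  have hDnn : 0 ≤ D := by positivity
  have main : ∀ t : ℝ, 0 < t → t < 1 →
      Hw + c * W + c * (1 - t) * D ≤ Hz + c * Z := by
    intro t ht0 ht1
    set u : EuclideanSpace ℝ (Fin n) := t • z + (1 - t) • w with hu
    have hcv := hconv z w t ht0.le ht1.le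
    rw [hHw, hHz, ← EReal.coe_mul, ← EReal.coe_mul, ← EReal.coe_add] at hcv
    have hunetop : h u ≠ ⊤ := ne_top_of_le_ne_top (EReal.coe_ne_top _) hcv
    have hunebot : h u ≠ ⊥ := hbot u
    set Ht : ℝ := (h u).toReal with hHt'
    have hHt : h u = (Ht : EReal) := (EReal.coe_toReal hunetop hunebot).symm
    rw [hHt, EReal.coe_le_coe_iff] at hcv
    have hm := hmin u
    rw [hHw, hHt, ← EReal.coe_add, ← EReal.coe_add, EReal.coe_le_coe_iff] at hm
    have hnorm : ‖u - y‖ ^ 2 = t * Z + (1 - t) * W - t * (1 - t) * D := by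
      have huy : u - y = t • (z - y) + (1 - t) • (w - y) := by
        rw [hu]; module
      rw [huy, norm_combo, sub_sub_sub_cancel_right]
    rw [hnorm] at hm
    have h3 : t * (Hw + c * W + c * (1 - t) * D) ≤ t * (Hz + c * Z) := by nlinarith [hm, hcv]
    exact le_of_mul_le_mul_left h3 ht0
  apply le_of_forall_pos_le_add
  intro ε hε
  set t : ℝ := min (1/2) (ε / (c * D + 1)) with htdef
  have hpos : 0 < c * D + 1 := by positivity
  have ht0 : 0 < t := lt_min (by norm_num) (by positivity)
  have ht1 : t < 1 := lt_of_le_of_lt (min_le_left _ _) (by norm_num)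
  have hkey := main t ht0 ht1
  have ht2 : t ≤ ε / (c * D + 1) := min_le_right _ _
  rw [le_div_iff₀ hpos] at ht2
  have htD : c * t * D ≤ ε := by nlinarith [ht0.le, hDnn, hc.le]
  linarith

lemma expand_id {n : ℕ} (α β : ℝ) (hα : α ≠ 0) (hβ : β ≠ 0)
    (x xa xb g : EuclideanSpace ℝ (Fin n)) :
    1 / (2 * α) * (‖xa - (x - α • g)‖ ^ 2 + ‖xb - xa‖ ^ 2 - ‖xb - (x - α • g)‖ ^ 2)
      + 1 / (2 * β) * (‖xb - (x - β • g)‖ ^ 2 + ‖xa - xb‖ ^ 2 - ‖xa - (x - β • g)‖ ^ 2)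
    = 1 / α * (‖x - xa‖ ^ 2 - ⟪x - xa, x - xb⟫)
      + 1 / β * (‖x - xb‖ ^ 2 - ⟪x - xa, x - xb⟫) := by
  have e : ∀ v : EuclideanSpace ℝ (Fin n), ‖v‖ ^ 2 = ⟪v, v⟫ :=
    fun v => (real_inner_self_eq_norm_sq v).symm
  simp only [e]
  simp only [inner_sub_left, inner_sub_right, real_inner_smul_left, real_inner_smul_right]
  rw [real_inner_comm xa x, real_inner_comm xb x, real_inner_comm g x,
    real_inner_comm xb xa, real_inner_comm g xa, real_inner_comm g xb]
  field_simp
  ring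


set_option maxHeartbeats 1000000 in
/-- monotonicity of the gradient mapping in the stepsize, for a
proper lower semicontinuous convex extended-real-valued function `h`.
`xa` and `xb` are the proximal points `prox_{αh}(x - αg)` and `prox_{βh}(x - βg)`,
characterized as global minimizers of the corresponding proximal objectives. -/
theorem stmt_1 {n : ℕ} (h : EuclideanSpace ℝ (Fin n) → EReal)
    (hconv : ∀ (u v : EuclideanSpace ℝ (Fin n)) (t : ℝ), 0 ≤ t → t ≤ 1 →
      h (t • u + (1 - t) • v) ≤ (t : EReal) * h u + ((1 - t : ℝ) : EReal) * h v)
    (hlsc : LowerSemicontinuous h)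
    (hproper_top : ∃ u, h u ≠ ⊤) (hproper_bot : ∀ u, h u ≠ ⊥)
    (x g : EuclideanSpace ℝ (Fin n)) (α β : ℝ) (hα : 0 < α) (hαβ : α < β)
    (hx : h x ≠ ⊤)
    (xa xb : EuclideanSpace ℝ (Fin n))
    (hxa : ∀ u, h xa + ((1 / (2 * α) * ‖xa - (x - α • g)‖ ^ 2 : ℝ) : EReal)
            ≤ h u + ((1 / (2 * α) * ‖u - (x - α • g)‖ ^ 2 : ℝ) : EReal))
    (hxb : ∀ u, h xb + ((1 / (2 * β) * ‖xb - (x - β • g)‖ ^ 2 : ℝ) : EReal)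
            ≤ h u + ((1 / (2 * β) * ‖u - (x - β • g)‖ ^ 2 : ℝ) : EReal)) :
    (1 / β) * ‖x - xb‖ ≤ (1 / α) * ‖x - xa‖ ∧ ‖x - xa‖ ≤ ‖x - xb‖ := by
  have hβ : 0 < β := hα.trans hαβ
  -- h x is finite
  have hHx : h x = ((h x).toReal : EReal) := (EReal.coe_toReal hx (hproper_bot x)).symm
  -- h xa finite
  have hane : h xa ≠ ⊤ := by
    intro htop
    have h1 := hxa x
    rw [htop, hHx, ← EReal.coe_add, EReal.top_add_of_ne_bot (EReal.coe_ne_bot _),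
      top_le_iff] at h1
    exact EReal.coe_ne_top _ h1
  have hbne : h xb ≠ ⊤ := by
    intro htop
    have h1 := hxb x
    rw [htop, hHx, ← EReal.coe_add, EReal.top_add_of_ne_bot (EReal.coe_ne_bot _),
      top_le_iff] at h1
    exact EReal.coe_ne_top _ h1
  set Ha : ℝ := (h xa).toReal with hHa'
  set Hb : ℝ := (h xb).toReal with hHb'
  have hHa : h xa = (Ha : EReal) := (EReal.coe_toReal hane (hproper_bot xa)).symm
  have hHb : h xb = (Hb : EReal) := (EReal.coe_toReal hbne (hproper_bot xb)).symm
  have S1 := aux_strong h hconv hproper_bot (1 / (2 * α)) (by positivity)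
    (x - α • g) xa xb Ha Hb hHa hHb hxa
  have S2 := aux_strong h hconv hproper_bot (1 / (2 * β)) (by positivity)
    (x - β • g) xb xa Hb Ha hHb hHa hxb
  have id1 := expand_id α β hα.ne' hβ.ne' x xa xb g
  set A : ℝ := ‖x - xa‖ with hA'
  set B : ℝ := ‖x - xb‖ with hB'
  set I : ℝ := ⟪x - xa, x - xb⟫ with hI'
  have key : 1 / α * (A ^ 2 - I) + 1 / β * (B ^ 2 - I) ≤ 0 := by
    rw [← id1]; linarith [S1, S2]
  have cs : I ≤ A * B := real_inner_le_norm _ _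
  have hAnn : 0 ≤ A := norm_nonneg _
  have hBnn : 0 ≤ B := norm_nonneg _
  have key2 : β * A ^ 2 + α * B ^ 2 - (α + β) * I ≤ 0 := by
    have h4 : (α * β) * (1 / α * (A ^ 2 - I) + 1 / β * (B ^ 2 - I)) ≤ 0 :=
      mul_nonpos_of_nonneg_of_nonpos (by positivity) key
    calc β * A ^ 2 + α * B ^ 2 - (α + β) * I
        = (α * β) * (1 / α * (A ^ 2 - I) + 1 / β * (B ^ 2 - I)) := by
          field_simp; ring
      _ ≤ 0 := h4
  have key3 : β * A ^ 2 + α * B ^ 2 ≤ (α + β) * (A * B) := by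
    have := mul_le_mul_of_nonneg_left cs (by positivity : (0:ℝ) ≤ α + β)
    linarith
  have goal2 : A ≤ B := by
    by_contra hc
    push_neg at hc
    have h5 : β * A - α * B ≤ 0 := by
      by_contra h6
      push_neg at h6
      have h7 := mul_pos (sub_pos.mpr hc) h6
      nlinarith [key3]
    nlinarith [h5, hc, hBnn, hα, hαβ, mul_pos hα (sub_pos.mpr hc)]
  refine ⟨?_, goal2⟩
  rw [one_div, one_div, inv_mul_eq_div, inv_mul_eq_div, div_le_div_iff₀ hβ hα]
  by_contra h7
  push_neg at h7
  nlinarith [key3, mul_nonneg (sub_nonneg.mpr goal2) (sub_pos.mpr h7).le,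
    mul_nonneg hAnn (sub_pos.mpr h7).le, mul_nonneg hBnn (sub_pos.mpr h7).le, hα, hαβ]
end

section
/- Let f : ℝⁿ → ℝ be differentiable with L-Lipschitz gradient, h convex, σ ∈ (0,1), and for x with g = ∇f(x) define x(t) = prox_{th}(x - tg) and G_t(x) = (x - x(t))/t. If 0 < t ≤ 2(1-σ)/L, then f(x(t)) + h(x(t)) ≤ f(x) + h(x) - σt‖G_t(x)‖². -/
open RealInnerProductSpace

/-!
The proximal optimality condition says that `(y - x(t)) / t` is a subgradient of `h` at `x(t)`,
where `y = x - t ∇f(x)`; tested at `x` it gives `h(x(t)) ≤ h(x) + ⟪∇f(x), x - x(t)⟫ - ‖x - x(t)‖² / t`.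
The descent lemma gives `f(x(t)) ≤ f(x) - ⟪∇f(x), x - x(t)⟫ + (L/2) ‖x - x(t)‖²`. Adding the two,
`ψ` decreases by `(1/t - L/2) ‖x - x(t)‖²`, and `t ≤ 2(1-σ)/L` is exactly `σ/t ≤ 1/t - L/2`.
-/

open Filter Topology

theorem le_of_forall_mem_Ioc_le_add_mul {a b c : ℝ}
    (h : ∀ l ∈ Set.Ioc (0 : ℝ) 1, c ≤ a + l * b) : c ≤ a := by
  have hlim : Tendsto (fun l : ℝ => a + l * b) (𝓝[>] 0) (𝓝 a) :=
    tendsto_nhdsWithin_of_tendsto_nhds <|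
      (continuous_const.add (continuous_id.mul continuous_const)).tendsto' 0 a (by simp)
  exact ge_of_tendsto hlim (by filter_upwards [Ioc_mem_nhdsGT one_pos] using h)

variable {E : Type*} [NormedAddCommGroup E] [InnerProductSpace ℝ E]

/-- `p` is a value of `prox_{t h}(y)`. -/
def IsProxPoint (h : E → ℝ) (t : ℝ) (y p : E) : Prop :=
  ∀ u, h p + 1 / (2 * t) * ‖p - y‖ ^ 2 ≤ h u + 1 / (2 * t) * ‖u - y‖ ^ 2

/-- The optimality condition `(y - p) / t ∈ ∂h(p)`. -/
theorem IsProxPoint.add_inner_le {h : E → ℝ} {t : ℝ} {y p : E} (hp : IsProxPoint h t y p)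
    (hconv : ConvexOn ℝ Set.univ h) (ht : 0 < t) (u : E) :
    h p + t⁻¹ * ⟪y - p, u - p⟫ ≤ h u := by
  set c := 1 / (2 * t)
  have htc : t⁻¹ = 2 * c := by simp only [c]; field_simp
  rw [htc]
  refine le_of_forall_mem_Ioc_le_add_mul (b := c * ‖u - p‖ ^ 2) fun l ⟨hl0, hl1⟩ => ?_
  have hconvex : h (p + l • (u - p)) ≤ (1 - l) * h p + l * h u := by
    rw [show p + l • (u - p) = (1 - l) • p + l • u by module]
    simpa only [smul_eq_mul] using
      hconv.2 (Set.mem_univ p) (Set.mem_univ u) (sub_nonneg.2 hl1) hl0.le (by ring)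
  have hmin := hp (p + l • (u - p))
  have hsq : ‖p + l • (u - p) - y‖ ^ 2
      = ‖p - y‖ ^ 2 - 2 * l * ⟪y - p, u - p⟫ + l ^ 2 * ‖u - p‖ ^ 2 := by
    rw [show p + l • (u - p) - y = (p - y) + l • (u - p) by abel, norm_add_sq_real,
      real_inner_smul_right, norm_smul, Real.norm_of_nonneg hl0.le, ← neg_sub y p,
      inner_neg_left]
    ring
  rw [hsq] at hmin
  refine le_of_mul_le_mul_left ?_ hl0
  linear_combination hmin + hconvex

variable [CompleteSpace E]

theorem hasDerivAt_comp_lineMap_of_differentiableAt {f : E → ℝ} {x v : E} {s : ℝ}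
    (hf : DifferentiableAt ℝ f (x + s • v)) :
    HasDerivAt (fun r : ℝ => f (x + r • v)) ⟪gradient f (x + s • v), v⟫ s := by
  have hline : HasDerivAt (fun r : ℝ => x + r • v) v s := by
    simpa using ((hasDerivAt_id s).smul_const v).const_add x
  have hfx : HasFDerivAt f (InnerProductSpace.toDual ℝ E (gradient f (x + s • v))) (x + s • v) :=
    hf.hasGradientAt.hasFDerivAt
  have h := hfx.comp_hasDerivAt s hline
  rw [InnerProductSpace.toDual_apply_apply] at h
  exact h

theorem inner_gradient_sub_le {f : E → ℝ} {L : ℝ}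
    (hlip : ∀ y z, ‖gradient f y - gradient f z‖ ≤ L * ‖y - z‖) (x v : E) {s : ℝ}
    (hs : 0 ≤ s) : ⟪gradient f (x + s • v) - gradient f x, v⟫ ≤ L * s * ‖v‖ ^ 2 :=
  calc ⟪gradient f (x + s • v) - gradient f x, v⟫
      ≤ ‖gradient f (x + s • v) - gradient f x‖ * ‖v‖ := real_inner_le_norm _ _
    _ ≤ L * ‖(x + s • v) - x‖ * ‖v‖ := by gcongr; exact hlip _ _
    _ = L * s * ‖v‖ ^ 2 := by
      rw [add_sub_cancel_left, norm_smul, Real.norm_of_nonneg hs]; ring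

theorem le_add_inner_gradient_add_sq_of_lipschitz {f : E → ℝ} {L : ℝ} (hf : Differentiable ℝ f)
    (hlip : ∀ y z, ‖gradient f y - gradient f z‖ ≤ L * ‖y - z‖) (x y : E) :
    f y ≤ f x + ⟪gradient f x, y - x⟫ + L / 2 * ‖y - x‖ ^ 2 := by
  set v := y - x
  -- `φ' s = ⟪∇f(x + s v) - ∇f(x), v⟫ - L s ‖v‖² ≤ 0` on `[0, 1]`
  let φ : ℝ → ℝ := fun s => f (x + s • v) - s * ⟪gradient f x, v⟫ - L / 2 * s ^ 2 * ‖v‖ ^ 2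
  have hφ' : ∀ s : ℝ, HasDerivAt φ
      (⟪gradient f (x + s • v), v⟫ - ⟪gradient f x, v⟫ - L * s * ‖v‖ ^ 2) s := by
    intro s
    have hquad := ((hasDerivAt_pow 2 s).const_mul (L / 2)).mul_const (‖v‖ ^ 2)
    refine (((hasDerivAt_comp_lineMap_of_differentiableAt (hf _)).sub
      ((hasDerivAt_id s).mul_const ⟪gradient f x, v⟫)).sub hquad).congr_deriv ?_
    simp only [Nat.add_one_sub_one, pow_one, Nat.cast_ofNat]
    ring
  have hanti : AntitoneOn φ (Set.Icc 0 1) := by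
    refine antitoneOn_of_hasDerivWithinAt_nonpos (convex_Icc 0 1)
      (fun s _ => (hφ' s).continuousAt.continuousWithinAt)
      (fun s _ => (hφ' s).hasDerivWithinAt) fun s hs => ?_
    rw [interior_Icc] at hs
    have := inner_gradient_sub_le hlip x v hs.1.le
    rw [inner_sub_left] at this
    linarith
  have h01 : φ 1 ≤ φ 0 := hanti (by simp) (by simp) zero_le_one
  simp only [φ, one_smul, zero_smul, add_zero, one_mul, one_pow, zero_mul, sub_zero,
    mul_zero, zero_pow two_ne_zero] at h01
  rw [add_sub_cancel] at h01
  linarith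

theorem IsProxPoint.sufficient_decrease {f h : E → ℝ} {L t : ℝ} {x p : E}
    (hf : Differentiable ℝ f) (hlip : ∀ y z, ‖gradient f y - gradient f z‖ ≤ L * ‖y - z‖)
    (hconv : ConvexOn ℝ Set.univ h) (ht : 0 < t)
    (hp : IsProxPoint h t (x - t • gradient f x) p) :
    f p + h p ≤ f x + h x - (1 / t - L / 2) * ‖x - p‖ ^ 2 := by
  have hprox := hp.add_inner_le hconv ht x
  have hdesc := le_add_inner_gradient_add_sq_of_lipschitz hf hlip x p
  have hinner : t⁻¹ * ⟪x - t • gradient f x - p, x - p⟫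
      = 1 / t * ‖x - p‖ ^ 2 - ⟪gradient f x, x - p⟫ := by
    rw [sub_right_comm, inner_sub_left, real_inner_smul_left, real_inner_self_eq_norm_sq]
    field_simp
  rw [hinner] at hprox
  rw [← neg_sub x p, inner_neg_right, norm_neg] at hdesc
  linarith

theorem stmt_8_general {n : ℕ} (f h : EuclideanSpace ℝ (Fin n) → ℝ)
    (L σ : ℝ) (hL : 0 < L)
    (hf : Differentiable ℝ f)
    (hlip : ∀ y z, ‖gradient f y - gradient f z‖ ≤ L * ‖y - z‖)
    (hconv : ConvexOn ℝ Set.univ h)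
    (x xt : EuclideanSpace ℝ (Fin n)) (t : ℝ)
    (ht0 : 0 < t) (ht : t ≤ 2 * (1 - σ) / L)
    (hxt : ∀ u, h xt + 1 / (2 * t) * ‖xt - (x - t • gradient f x)‖ ^ 2
            ≤ h u + 1 / (2 * t) * ‖u - (x - t • gradient f x)‖ ^ 2) :
    f xt + h xt ≤ f x + h x - σ * t * ‖(1 / t) • (x - xt)‖ ^ 2 := by
  have hdecrease := IsProxPoint.sufficient_decrease hf hlip hconv ht0 hxt
  have htL : t * L ≤ 2 * (1 - σ) := (le_div_iff₀ hL).mp ht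
  have hcoef : σ * t * (1 / t) ^ 2 ≤ 1 / t - L / 2 := by
    field_simp
    linarith
  have hnorm : ‖(1 / t) • (x - xt)‖ ^ 2 = (1 / t) ^ 2 * ‖x - xt‖ ^ 2 := by
    rw [norm_smul, mul_pow, Real.norm_of_nonneg (by positivity)]
  rw [hnorm, ← mul_assoc]
  linarith [mul_le_mul_of_nonneg_right hcoef (sq_nonneg ‖x - xt‖)]

/-- sufficient decrease of the proximal gradient step: for
0 < t ≤ 2(1-σ)/L, ψ(x(t)) ≤ ψ(x) - σt‖G_t(x)‖², where
x(t) = prox_{th}(x - t∇f(x)) and G_t(x) = (x - x(t))/t. -/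
theorem stmt_8 {n : ℕ} (f h : EuclideanSpace ℝ (Fin n) → ℝ)
    (L σ : ℝ) (hL : 0 < L) (hσ : σ ∈ Set.Ioo (0 : ℝ) 1)
    (hf : Differentiable ℝ f)
    (hlip : ∀ y z, ‖gradient f y - gradient f z‖ ≤ L * ‖y - z‖)
    (hconv : ConvexOn ℝ Set.univ h)
    (x xt : EuclideanSpace ℝ (Fin n)) (t : ℝ)
    (ht0 : 0 < t) (ht : t ≤ 2 * (1 - σ) / L)
    (hxt : ∀ u, h xt + 1 / (2 * t) * ‖xt - (x - t • gradient f x)‖ ^ 2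
            ≤ h u + 1 / (2 * t) * ‖u - (x - t • gradient f x)‖ ^ 2) :
    f xt + h xt ≤ f x + h x - σ * t * ‖(1 / t) • (x - xt)‖ ^ 2 :=
  stmt_8_general f h L σ hL hf hlip hconv x xt t ht0 ht hxt
end

section
/- Let (x_k) be a sequence in ℝⁿ, X* a closed set, c₂ > 0, ρ ∈ (0,1), and suppose for all k ≥ K: ‖x_{k+1} - x_k‖ ≤ c₂·dist(x_k, X*) and dist(x_{k+1}, X*) ≤ ρ·dist(x_k, X*). Then (x_k) is a Cauchy sequence, and its limit x̄ satisfies ‖x_k - x̄‖ ≤ (c₂/(1-ρ))·dist(x_k, X*) for all k ≥ K. -/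
/-!
From index `K` on, the distances `d k` to the solution set decay geometrically, so the step
lengths, being at most `C * d k`, are dominated by the geometric sequence `C * d k * ρ ^ j`.
Summing this tail bound gives both the Cauchy property and the estimate
`dist (x k) x̄ ≤ C * d k / (1 - ρ)` on the distance to the limit.
-/

open Filter Topology

theorem le_pow_mul_of_le_mul_succ {d : ℕ → ℝ} {ρ : ℝ} (hρ : 0 ≤ ρ) {K : ℕ}
    (hdec : ∀ k ≥ K, d (k + 1) ≤ ρ * d k) {k : ℕ} (hk : K ≤ k) (j : ℕ) :
    d (j + k) ≤ ρ ^ j * d k := by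
  simpa using le_geom (u := fun j ↦ d (j + k)) hρ j fun i _ ↦ by
    simpa only [add_right_comm i 1 k] using hdec (i + k) (by omega)

section LinearDecay

variable {α : Type*} [PseudoMetricSpace α] {x : ℕ → α} {d : ℕ → ℝ} {C ρ : ℝ} {K : ℕ}

theorem dist_succ_le_geometric_of_linear_decay (hC : 0 ≤ C) (hρ : 0 ≤ ρ)
    (hstep : ∀ k ≥ K, dist (x k) (x (k + 1)) ≤ C * d k)
    (hdec : ∀ k ≥ K, d (k + 1) ≤ ρ * d k) {k : ℕ} (hk : K ≤ k) (j : ℕ) :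
    dist (x (j + k)) (x (j + 1 + k)) ≤ C * d k * ρ ^ j :=
  calc dist (x (j + k)) (x (j + 1 + k))
      ≤ C * d (j + k) := by
        simpa only [add_right_comm j 1 k] using hstep (j + k) (by omega)
    _ ≤ C * (ρ ^ j * d k) := by gcongr; exact le_pow_mul_of_le_mul_succ hρ hdec hk j
    _ = C * d k * ρ ^ j := by ring

theorem cauchySeq_of_linear_decay (hC : 0 ≤ C) (hρ₀ : 0 ≤ ρ) (hρ₁ : ρ < 1)
    (hstep : ∀ k ≥ K, dist (x k) (x (k + 1)) ≤ C * d k)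
    (hdec : ∀ k ≥ K, d (k + 1) ≤ ρ * d k) : CauchySeq x :=
  (cauchySeq_shift K).mp <| cauchySeq_of_le_geometric ρ _ hρ₁
    (dist_succ_le_geometric_of_linear_decay hC hρ₀ hstep hdec le_rfl)

theorem dist_le_of_tendsto_of_linear_decay (hC : 0 ≤ C) (hρ₀ : 0 ≤ ρ) (hρ₁ : ρ < 1)
    (hstep : ∀ k ≥ K, dist (x k) (x (k + 1)) ≤ C * d k)
    (hdec : ∀ k ≥ K, d (k + 1) ≤ ρ * d k) {a : α} (hx : Tendsto x atTop (𝓝 a))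
    {k : ℕ} (hk : K ≤ k) : dist (x k) a ≤ C * d k / (1 - ρ) := by
  simpa using dist_le_of_le_geometric_of_tendsto₀ ρ _ hρ₁
    (dist_succ_le_geometric_of_linear_decay hC hρ₀ hstep hdec hk)
    (hx.comp (tendsto_add_atTop_nat k))

end LinearDecay

theorem stmt_13_general {n : ℕ} (x : ℕ → EuclideanSpace ℝ (Fin n))
    (Xs : Set (EuclideanSpace ℝ (Fin n)))
    (c₂ ρ : ℝ) (hc₂ : 0 < c₂) (hρ : ρ ∈ Set.Ioo (0 : ℝ) 1) (K : ℕ)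
    (hstep : ∀ k ≥ K, ‖x (k + 1) - x k‖ ≤ c₂ * Metric.infDist (x k) Xs)
    (hdec : ∀ k ≥ K, Metric.infDist (x (k + 1)) Xs ≤ ρ * Metric.infDist (x k) Xs) :
    CauchySeq x ∧
    ∀ xbar, Tendsto x atTop (nhds xbar) →
      ∀ k ≥ K, ‖x k - xbar‖ ≤ c₂ / (1 - ρ) * Metric.infDist (x k) Xs := by
  have hstep' : ∀ k ≥ K, dist (x k) (x (k + 1)) ≤ c₂ * Metric.infDist (x k) Xs := by
    intro k hk
    rw [dist_comm, dist_eq_norm]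
    exact hstep k hk
  refine ⟨cauchySeq_of_linear_decay hc₂.le hρ.1.le hρ.2 hstep' hdec, fun xbar hx k hk ↦ ?_⟩
  rw [← dist_eq_norm, div_mul_eq_mul_div]
  exact dist_le_of_tendsto_of_linear_decay hc₂.le hρ.1.le hρ.2 hstep' hdec hx hk

/-- if for k ≥ K, ‖x_{k+1} - x_k‖ ≤ c₂·dist(x_k, X*) and
dist(x_{k+1}, X*) ≤ ρ·dist(x_k, X*) with ρ ∈ (0,1), then (x_k) is Cauchy and
its limit x̄ satisfies ‖x_k - x̄‖ ≤ (c₂/(1-ρ))·dist(x_k, X*) for all k ≥ K. -/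
theorem stmt_13 {n : ℕ} (x : ℕ → EuclideanSpace ℝ (Fin n))
    (Xs : Set (EuclideanSpace ℝ (Fin n))) (hXs : IsClosed Xs)
    (c₂ ρ : ℝ) (hc₂ : 0 < c₂) (hρ : ρ ∈ Set.Ioo (0 : ℝ) 1) (K : ℕ)
    (hstep : ∀ k ≥ K, ‖x (k + 1) - x k‖ ≤ c₂ * Metric.infDist (x k) Xs)
    (hdec : ∀ k ≥ K, Metric.infDist (x (k + 1)) Xs ≤ ρ * Metric.infDist (x k) Xs) :
    CauchySeq x ∧
    ∀ xbar, Tendsto x atTop (nhds xbar) →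
      ∀ k ≥ K, ‖x k - xbar‖ ≤ c₂ / (1 - ρ) * Metric.infDist (x k) Xs :=
  stmt_13_general x Xs c₂ ρ hc₂ hρ K hstep hdec
end

section
/- Let H ⪰ 0 symmetric with ‖H‖ ≤ λ_max, μ ∈ (0, μ̄], τ ∈ (0,1), and suppose (H + μI)p = g + r with ‖r‖ ≤ τμ‖p‖ and, from an error bound, c₁‖g‖ ≥ c̃‖p‖ for constants c₁, c̃ > 0 with c₁τμ ≤ c̃. Then ‖(H + μI)p‖ ≥ (c̃/(2c₁))‖p‖, and consequently pᵀ(H + μI)p ≥ (λ_max + μ̄)⁻¹ (c̃²/(4c₁²)) ‖p‖². -/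
/-!
Put `A = H + μI`, a positive operator with `‖A‖ ≤ λ_max + μ̄` and `μ‖p‖ ≤ ‖Ap‖`. Since
`‖r‖ ≤ τμ‖p‖ ≤ ‖Ap‖`, the triangle inequality gives `‖g‖ ≤ ‖Ap‖ + ‖r‖ ≤ 2‖Ap‖`, and the error
bound turns this into the first claim. For the second, Cauchy–Schwarz for the semi-inner product
`(x, y) ↦ ⟪A x, y⟫` gives `‖Ap‖⁴ ≤ ⟪Ap, p⟫ ⟪A(Ap), Ap⟫ ≤ ⟪Ap, p⟫ ‖A‖ ‖Ap‖²`, i.e.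
`‖Ap‖² ≤ ‖A‖ ⟪p, Ap⟫`, and we square the first claim.
-/

open RealInnerProductSpace

namespace ContinuousLinearMap

variable {E : Type*} [NormedAddCommGroup E] [InnerProductSpace ℝ E] {T : E →L[ℝ] E}

theorem IsPositive.inner_apply_sq_le (hT : T.IsPositive) (x y : E) :
    ⟪T x, y⟫ ^ 2 ≤ ⟪T x, x⟫ * ⟪T y, y⟫ := by
  have hquad : ∀ t : ℝ, 0 ≤ ⟪T y, y⟫ * (t * t) + 2 * ⟪T x, y⟫ * t + ⟪T x, x⟫ := fun t => by
    have hyx : ⟪T y, x⟫ = ⟪T x, y⟫ := by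
      rw [hT.inner_left_eq_inner_right, real_inner_comm]
    have h := hT.inner_nonneg_left (x + t • y)
    simp only [map_add, map_smul, inner_add_left, inner_add_right, real_inner_smul_left,
      real_inner_smul_right, hyx] at h
    linarith
  have := discrim_le_zero hquad
  rw [discrim] at this
  linarith

theorem IsPositive.norm_apply_sq_le (hT : T.IsPositive) (x : E) :
    ‖T x‖ ^ 2 ≤ ‖T‖ * ⟪T x, x⟫ := by
  rcases (norm_nonneg (T x)).eq_or_lt with hTx | hTx
  · rw [← hTx]
    simpa using mul_nonneg (norm_nonneg T) (hT.inner_nonneg_left x)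
  · have hcs : (‖T x‖ ^ 2) ^ 2 ≤ ⟪T x, x⟫ * ⟪T (T x), T x⟫ := by
      simpa [real_inner_self_eq_norm_sq] using hT.inner_apply_sq_le x (T x)
    have hnorm : ⟪T (T x), T x⟫ ≤ ‖T‖ * ‖T x‖ ^ 2 :=
      calc ⟪T (T x), T x⟫ ≤ ‖T (T x)‖ * ‖T x‖ := real_inner_le_norm _ _
        _ ≤ ‖T‖ * ‖T x‖ * ‖T x‖ := by gcongr; exact T.le_opNorm _
        _ = ‖T‖ * ‖T x‖ ^ 2 := by ring
    have := hcs.trans (mul_le_mul_of_nonneg_left hnorm (hT.inner_nonneg_left x))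
    nlinarith [pow_pos hTx 2]

theorem IsPositive.mul_norm_le_norm_add_smul (hT : T.IsPositive) (μ : ℝ) (x : E) :
    μ * ‖x‖ ≤ ‖T x + μ • x‖ := by
  rcases (norm_nonneg x).eq_or_lt with hx | hx
  · rw [← hx, mul_zero]; exact norm_nonneg _
  · refine le_of_mul_le_mul_right ?_ hx
    calc μ * ‖x‖ * ‖x‖ ≤ ⟪T x + μ • x, x⟫ := by
          rw [inner_add_left, real_inner_smul_left, real_inner_self_eq_norm_sq]
          nlinarith [hT.inner_nonneg_left x]
      _ ≤ ‖T x + μ • x‖ * ‖x‖ := real_inner_le_norm _ _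

theorem IsPositive.inv_mul_sq_mul_sq_le_inner (hT : T.IsPositive) {M c : ℝ} (hM : ‖T‖ ≤ M)
    (hc : 0 ≤ c) {x : E} (hx : c * ‖x‖ ≤ ‖T x‖) :
    M⁻¹ * c ^ 2 * ‖x‖ ^ 2 ≤ ⟪x, T x⟫ := by
  rcases ((norm_nonneg T).trans hM).eq_or_lt with hM0 | hMpos
  · rw [← hM0, inv_zero, zero_mul, zero_mul, real_inner_comm]
    exact hT.inner_nonneg_left x
  rw [mul_assoc, inv_mul_le_iff₀ hMpos, real_inner_comm]
  calc c ^ 2 * ‖x‖ ^ 2 = (c * ‖x‖) ^ 2 := by ring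
    _ ≤ ‖T x‖ ^ 2 := by gcongr
    _ ≤ ‖T‖ * ⟪T x, x⟫ := hT.norm_apply_sq_le x
    _ ≤ M * ⟪T x, x⟫ := by gcongr; exact hT.inner_nonneg_left x

end ContinuousLinearMap

theorem norm_le_two_mul_norm_add {E : Type*} [SeminormedAddCommGroup E] {g r : E}
    (h : ‖r‖ ≤ ‖g + r‖) : ‖g‖ ≤ 2 * ‖g + r‖ := by
  have := norm_sub_le (g + r) r
  rw [add_sub_cancel_right] at this
  linarith

theorem stmt_17_general {n : ℕ}
    (H : EuclideanSpace ℝ (Fin n) →L[ℝ] EuclideanSpace ℝ (Fin n))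
    (hsym : IsSelfAdjoint H) (hpsd : ∀ x, 0 ≤ ⟪H x, x⟫)
    (lmax μ μbar τ c₁ ctil : ℝ)
    (hH : ‖H‖ ≤ lmax) (hμ : 0 < μ) (hμbar : μ ≤ μbar)
    (hτ : τ ∈ Set.Ioo (0 : ℝ) 1) (hc₁ : 0 < c₁) (hctil : 0 < ctil)
    (g r p : EuclideanSpace ℝ (Fin n))
    (heq : H p + μ • p = g + r) (hr : ‖r‖ ≤ τ * μ * ‖p‖)
    (heb : ctil * ‖p‖ ≤ c₁ * ‖g‖) :
    ctil / (2 * c₁) * ‖p‖ ≤ ‖H p + μ • p‖ ∧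
    (lmax + μbar)⁻¹ * (ctil ^ 2 / (4 * c₁ ^ 2)) * ‖p‖ ^ 2
      ≤ ⟪p, H p + μ • p⟫ := by
  have hHpos : H.IsPositive := (H.isPositive_iff').2 ⟨hsym, hpsd⟩
  set A := H + μ • ContinuousLinearMap.id ℝ (EuclideanSpace ℝ (Fin n))
  have hApos : A.IsPositive := hHpos.add (ContinuousLinearMap.isPositive_id.smul_of_nonneg hμ.le)
  have hAp : A p = H p + μ • p := rfl
  have hAnorm : ‖A‖ ≤ lmax + μbar :=
    calc ‖A‖ ≤ ‖H‖ + μ * ‖ContinuousLinearMap.id ℝ (EuclideanSpace ℝ (Fin n))‖ := by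
          refine (norm_add_le _ _).trans_eq ?_
          rw [norm_smul, Real.norm_of_nonneg hμ.le]
      _ ≤ lmax + μbar * 1 := by
          gcongr
          · linarith
          · exact ContinuousLinearMap.norm_id_le
      _ = lmax + μbar := by rw [mul_one]
  have hr_le : ‖r‖ ≤ ‖g + r‖ := by
    rw [← heq]
    calc ‖r‖ ≤ τ * μ * ‖p‖ := hr
      _ ≤ μ * ‖p‖ := by rw [mul_assoc]; exact mul_le_of_le_one_left (by positivity) hτ.2.le
      _ ≤ ‖H p + μ • p‖ := hHpos.mul_norm_le_norm_add_smul μ p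
  have hfirst : ctil / (2 * c₁) * ‖p‖ ≤ ‖H p + μ • p‖ := by
    rw [div_mul_eq_mul_div, div_le_iff₀ (by positivity), heq]
    nlinarith [norm_le_two_mul_norm_add hr_le]
  refine ⟨hfirst, ?_⟩
  have hsq : ctil ^ 2 / (4 * c₁ ^ 2) = (ctil / (2 * c₁)) ^ 2 := by ring
  rw [hsq, ← hAp]
  exact hApos.inv_mul_sq_mul_sq_le_inner hAnorm (by positivity) hfirst

/-- curvature lower bound for the safeguarded step: under
(H + μI)p = g + r, ‖r‖ ≤ τμ‖p‖, the error bound c₁‖g‖ ≥ c̃‖p‖ and c₁τμ ≤ c̃,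
we get ‖(H + μI)p‖ ≥ (c̃/(2c₁))‖p‖ and
pᵀ(H + μI)p ≥ (λmax + μ̄)⁻¹(c̃²/(4c₁²))‖p‖². -/
theorem stmt_17 {n : ℕ}
    (H : EuclideanSpace ℝ (Fin n) →L[ℝ] EuclideanSpace ℝ (Fin n))
    (hsym : IsSelfAdjoint H) (hpsd : ∀ x, 0 ≤ ⟪H x, x⟫)
    (lmax μ μbar τ c₁ ctil : ℝ)
    (hH : ‖H‖ ≤ lmax) (hμ : 0 < μ) (hμbar : μ ≤ μbar)
    (hτ : τ ∈ Set.Ioo (0 : ℝ) 1) (hc₁ : 0 < c₁) (hctil : 0 < ctil)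
    (g r p : EuclideanSpace ℝ (Fin n))
    (heq : H p + μ • p = g + r) (hr : ‖r‖ ≤ τ * μ * ‖p‖)
    (heb : ctil * ‖p‖ ≤ c₁ * ‖g‖) (hsmall : c₁ * τ * μ ≤ ctil) :
    ctil / (2 * c₁) * ‖p‖ ≤ ‖H p + μ • p‖ ∧
    (lmax + μbar)⁻¹ * (ctil ^ 2 / (4 * c₁ ^ 2)) * ‖p‖ ^ 2
      ≤ ⟪p, H p + μ • p⟫ :=
  stmt_17_general H hsym hpsd lmax μ μbar τ c₁ ctil hH hμ hμbar hτ hc₁ hctil g r p heq hr heb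
end
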